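/- arXiv:2309.13346 — 5 statements merged into one kernel-verified Lean document; each statement's English description precedes it below -/
import Mathlib

section
/- Let π₁ and π₂ be anisotropic quasi-Pfister forms over F. Then π₁ ⊆ π₂ if and only if π₂ ≃ π₁ ⊗ γ for some diagonal quasilinear p-form γ over F; moreover, in that case γ can be chosen to be a quasi-Pfister form. -/
/-!
Diagonal quasilinear `p`-forms over a field `F` of characteristic `p`,
following Hoffmann and Zemková. A form of dimension `n` is recorded by its
coefficient tuple `a : ι → F` (for a finite index type `ι`), the form being
`x ↦ ∑ i, a i * (x i)^p`.
-/

universe u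

namespace QLF

open scoped BigOperators

/-- Evaluation of the diagonal quasilinear `p`-form with coefficients `a` at `x`. -/
def eval (p : ℕ) {F : Type*} [CommRing F] {ι : Type*} [Fintype ι]
    (a : ι → F) (x : ι → F) : F :=
  ∑ i, a i * x i ^ p

/-- A form is isotropic if it has a nontrivial zero. -/
def Isotropic (p : ℕ) {F : Type*} [CommRing F] {ι : Type*} [Fintype ι] (a : ι → F) : Prop :=
  ∃ x : ι → F, x ≠ 0 ∧ eval p a x = 0

/-- A form is anisotropic if it has no nontrivial zero. -/
def Anisotropic (p : ℕ) {F : Type*} [CommRing F] {ι : Type*} [Fintype ι] (a : ι → F) : Prop :=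
  ¬ Isotropic p a

/-- In characteristic `p`, the zero set of a diagonal quasilinear `p`-form is a
linear subspace. -/
def zeroSubmodule (p : ℕ) [Fact p.Prime] {F : Type*} [Field F] [CharP F p]
    {ι : Type*} [Fintype ι] (a : ι → F) : Submodule F (ι → F) where
  carrier := {x | eval p a x = 0}
  zero_mem' := by
    have hp : p ≠ 0 := (Fact.out : p.Prime).ne_zero
    simp [eval, zero_pow hp]
  add_mem' := by
    intro x y hx hy
    haveI : ExpChar F p := .prime Fact.out
    have hxy : eval p a (x + y) = eval p a x + eval p a y := by
      simp only [eval, Pi.add_apply]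
      rw [← Finset.sum_add_distrib]
      exact Finset.sum_congr rfl fun i _ => by rw [add_pow_char, mul_add]
    simp only [Set.mem_setOf_eq] at *
    rw [hxy, hx, hy, add_zero]
  smul_mem' := by
    intro c x hx
    simp only [Set.mem_setOf_eq] at *
    have hcx : eval p a (c • x) = c ^ p * eval p a x := by
      simp only [eval, Pi.smul_apply, smul_eq_mul, Finset.mul_sum]
      exact Finset.sum_congr rfl fun i _ => by rw [mul_pow]; ring
    rw [hcx, hx, mul_zero]

/-- The defect `i₀` of a form: the dimension of its zero set. -/
noncomputable def defect (p : ℕ) [Fact p.Prime] {F : Type*} [Field F] [CharP F p]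
    {ι : Type*} [Fintype ι] (a : ι → F) : ℕ :=
  Module.finrank F (zeroSubmodule p a)

/-- Isometry of forms: a linear bijection carrying one form into the other. -/
def Isometric (p : ℕ) {F : Type*} [Field F] {ι κ : Type*} [Fintype ι] [Fintype κ]
    (a : ι → F) (b : κ → F) : Prop :=
  ∃ T : (ι → F) ≃ₗ[F] (κ → F), ∀ x, eval p a x = eval p b (T x)

/-- `a` is a subform of `b`. -/
def Subform (p : ℕ) {F : Type*} [Field F] {ι κ : Type*} [Fintype ι] [Fintype κ]
    (a : ι → F) (b : κ → F) : Prop :=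
  ∃ T : (ι → F) →ₗ[F] (κ → F), Function.Injective T ∧ ∀ x, eval p a x = eval p b (T x)

/-- Similarity of forms: `a ≃ c·b` for some scalar `c ≠ 0`. -/
def Similar (p : ℕ) {F : Type*} [Field F] {ι κ : Type*} [Fintype ι] [Fintype κ]
    (a : ι → F) (b : κ → F) : Prop :=
  ∃ c : F, c ≠ 0 ∧ Isometric p a (fun i => c * b i)

/-- Vishik equivalence: same dimension, and equal defects over every field
extension `E/F`. -/
def VishikEquiv (p : ℕ) [Fact p.Prime] {F : Type u} [Field F] [CharP F p]
    {ι κ : Type*} [Fintype ι] [Fintype κ] (a : ι → F) (b : κ → F) : Prop :=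
  Fintype.card ι = Fintype.card κ ∧
    ∀ (E : Type u) [Field E] [CharP E p] (f : F →+* E),
      defect p (f ∘ a) = defect p (f ∘ b)

/-- Weak Vishik equivalence: same dimension, and equal defects over every field
extension of the shape `E = F(α)` with `αᵖ ∈ F` (this includes `E = F`). -/
def WeakVishikEquiv (p : ℕ) [Fact p.Prime] {F : Type u} [Field F] [CharP F p]
    {ι κ : Type*} [Fintype ι] [Fintype κ] (a : ι → F) (b : κ → F) : Prop :=
  Fintype.card ι = Fintype.card κ ∧
    ∀ (E : Type u) [Field E] [CharP E p] (f : F →+* E) (α : E),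
      α ^ p ∈ Set.range ⇑f →
      Subfield.closure (insert α (Set.range ⇑f)) = ⊤ →
      defect p (f ∘ a) = defect p (f ∘ b)

/-- The set `Fᵖ` of `p`-th powers. -/
def pSet (p : ℕ) (F : Type*) [Field F] : Set F := Set.range fun x : F => x ^ p

/-- The subfield `Fᵖ` of `p`-th powers (in characteristic `p` the set of `p`-th
powers is already a subfield, so the closure adds nothing). -/
def pthSubfield (p : ℕ) (F : Type*) [Field F] : Subfield F :=
  Subfield.closure (pSet p F)

/-- The subfield `Fᵖ(s)` generated by a set `s` over `Fᵖ`. -/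
def adjoin (p : ℕ) {F : Type*} [Field F] (s : Set F) : Subfield F :=
  Subfield.closure (pSet p F ∪ s)

/-- The degree `[N : k]` of a subfield `N` over a subfield `k` (for `k ≤ N`,
the `k`-span of `N` in `F` is `N` itself, so this is the `k`-dimension of `N`). -/
noncomputable def degOver {F : Type*} [Field F] (k : Subfield F) (N : Subfield F) : ℕ :=
  Module.finrank k (Submodule.span k (N : Set F))

/-- The set `D_F(φ)` of values of the form. -/
def values (p : ℕ) {F : Type*} [CommRing F] {ι : Type*} [Fintype ι] (a : ι → F) : Set F :=
  Set.range (eval p a)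

/-- The norm field `N_F(φ)`: the subfield generated over `Fᵖ` by all quotients
of nonzero values of `φ`. -/
def normField (p : ℕ) {F : Type*} [Field F] {ι : Type*} [Fintype ι] (a : ι → F) : Subfield F :=
  adjoin p {z : F | ∃ u ∈ values p a, ∃ v ∈ values p a, u ≠ 0 ∧ v ≠ 0 ∧ z = u / v}

/-- The norm degree `ndeg_F(φ) = [N_F(φ) : Fᵖ]`. -/
noncomputable def ndeg (p : ℕ) {F : Type*} [Field F] {ι : Type*} [Fintype ι] (a : ι → F) : ℕ :=
  degOver (pthSubfield p F) (normField p a)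

/-- An anisotropic form is minimal if `ndeg_F(φ) = p^(dim φ - 1)`. -/
def Minimal (p : ℕ) {F : Type*} [Field F] {ι : Type*} [Fintype ι] (a : ι → F) : Prop :=
  Anisotropic p a ∧ ndeg p a = p ^ (Fintype.card ι - 1)

/-- The quasi-Pfister form `⟪b₁,…,bₙ⟫`: its coefficients are all products
`b₁^{e₁}⋯bₙ^{eₙ}` with `0 ≤ eᵢ ≤ p-1`. -/
def pfister (p : ℕ) {F : Type*} [CommRing F] {n : ℕ} (b : Fin n → F) :
    (Fin n → Fin p) → F :=
  fun e => ∏ i, b i ^ (e i : ℕ)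

/-- A form is a quasi-Pfister form if it is isometric to some `⟪b₁,…,bₙ⟫`
with all `bᵢ ∈ F×`. -/
def IsQuasiPfister (p : ℕ) {F : Type*} [Field F] {ι : Type*} [Fintype ι] (a : ι → F) : Prop :=
  ∃ (n : ℕ) (b : Fin n → F), (∀ i, b i ≠ 0) ∧ Isometric p a (pfister p b)

/-- `a` is a quasi-Pfister neighbor of the form `π`: `c·a ⊆ π` for some `c ≠ 0`
and `p · dim a > dim π`. -/
def IsNeighborOf (p : ℕ) {F : Type*} [Field F] {ι κ : Type*} [Fintype ι] [Fintype κ]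
    (a : ι → F) (π : κ → F) : Prop :=
  ∃ c : F, c ≠ 0 ∧ Subform p (fun i => c * a i) π ∧ p * Fintype.card ι > Fintype.card κ

/-- `a` is a quasi-Pfister neighbor (of some quasi-Pfister form). -/
def IsQPNeighbor (p : ℕ) {F : Type*} [Field F] {ι : Type*} [Fintype ι] (a : ι → F) : Prop :=
  ∃ (n : ℕ) (b : Fin n → F), (∀ i, b i ≠ 0) ∧ IsNeighborOf p a (pfister p b)

/-- `a` is a quasi-Pfister neighbor of codimension one of some anisotropic
quasi-Pfister form: `dim π - dim a = 1`. -/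
def IsQPNeighborCodimOne (p : ℕ) {F : Type*} [Field F] {ι : Type*} [Fintype ι]
    (a : ι → F) : Prop :=
  ∃ (n : ℕ) (b : Fin n → F), (∀ i, b i ≠ 0) ∧ Anisotropic p (pfister p b) ∧
    IsNeighborOf p a (pfister p b) ∧ Fintype.card ι + 1 = p ^ n

/-- Tensor product of diagonal forms: coefficients `aᵢ · bⱼ`. -/
def tensor (p : ℕ) {F : Type*} [CommRing F] {ι κ : Type*}
    (a : ι → F) (b : κ → F) : ι × κ → F :=
  fun ik => a ik.1 * b ik.2

/-- The set `G_F(φ) = {x ∈ F× : xφ ≃ φ} ∪ {0}` of similarity factors. -/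
def simFactors (p : ℕ) {F : Type*} [Field F] {ι : Type*} [Fintype ι] (a : ι → F) : Set F :=
  {x | x ≠ 0 ∧ Isometric p (fun i => x * a i) a} ∪ {0}

/-- `b` is the anisotropic part of `a`: `b` is anisotropic and
`a ≃ b ⊥ (m × ⟨0⟩)` for some `m`. -/
def IsAnisotropicPart (p : ℕ) {F : Type*} [Field F] {ι κ : Type*} [Fintype ι] [Fintype κ]
    (a : ι → F) (b : κ → F) : Prop :=
  Anisotropic p b ∧ ∃ m : ℕ, Isometric p a (Sum.elim b fun _ : Fin m => (0 : F))

/-- `⟪c₁,…,cₘ⟫` is (a representative of) the norm form of `a`: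
`N_F(a) = Fᵖ(c₁,…,cₘ)` and `ndeg_F(a) = pᵐ`. -/
def IsNormForm (p : ℕ) {F : Type*} [Field F] {ι : Type*} [Fintype ι] (a : ι → F)
    {m : ℕ} (c : Fin m → F) : Prop :=
  normField p a = adjoin p (Set.range c) ∧ ndeg p a = p ^ m

end QLF

/-!
The value set `D(φ)` of a diagonal quasilinear `p`-form is the `Fᵖ`-span of its coefficients,
and for an anisotropic form `φ ↦ D(φ)` loses nothing: evaluation is injective, additive and
`Fᵖ`-semilinear, so `φ ⊆ ψ` iff `D(φ) ⊆ D(ψ)`, and `φ ≃ ψ` iff `D(φ) = D(ψ)`, for anisotropic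
`φ`, `ψ`. For `⟪b₁,…,bₘ⟫` the value set is the field `Fᵖ(b₁,…,bₘ)`.

If `π₁ = ⟪a⟫ ⊆ π₂ = ⟪b⟫`, then `K = Fᵖ(a) ⊆ Fᵖ(b) = K(b)`. Running through `b` and keeping
`bᵢ` only when it is not already in the field generated by the kept ones gives a `p`-basis `c`
of `K(b)/K`: since `bᵢᵖ ∈ K`, each kept element multiplies the degree by `p`, with basis
`1, bᵢ, …, bᵢ^(p-1)`. Then the monomials of `⟪c⟫` are `K`-linearly independent, so
`π₁ ⊗ ⟪c⟫` is anisotropic with value set `K(c) = Fᵖ(b)`, hence isometric to `π₂`.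
Conversely, if `π₂ ≃ π₁ ⊗ γ`, some `γⱼ` is nonzero, lies in the field `Fᵖ(b)`, and
`γⱼ · D(π₁) ⊆ Fᵖ(b)`; dividing by `γⱼ` gives `D(π₁) ⊆ D(π₂)`.
-/

open Finset Function

section Subfield

variable {F ι : Type*} [Field F] [Fintype ι] {K : Subfield F} {v : ι → F}

theorem Subfield.mem_span_range_iff_exists_fun {x : F} :
    x ∈ Submodule.span K (Set.range v) ↔ ∃ l : ι → F, (∀ i, l i ∈ K) ∧ ∑ i, l i * v i = x := by
  rw [Submodule.mem_span_range_iff_exists_fun]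
  constructor
  · rintro ⟨c, rfl⟩
    exact ⟨fun i => c i, fun i => (c i).2, rfl⟩
  · rintro ⟨l, hl, rfl⟩
    exact ⟨fun i => ⟨l i, hl i⟩, rfl⟩

theorem Subfield.linearIndependent_iff :
    LinearIndependent K v ↔ ∀ l : ι → F, (∀ i, l i ∈ K) → ∑ i, l i * v i = 0 → ∀ i, l i = 0 := by
  rw [Fintype.linearIndependent_iff]
  constructor
  · intro h l hl hsum i
    exact congrArg Subtype.val (h (fun i => ⟨l i, hl i⟩) hsum i)
  · intro h c hsum i
    exact Subtype.ext (h (fun i => c i) (fun i => (c i).2) hsum i)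

end Subfield

theorem Fintype.sum_fin_succ_pi {M α : Type*} [AddCommMonoid M] [Fintype α] {m : ℕ}
    (h : (Fin (m + 1) → α) → M) : ∑ g, h g = ∑ i, ∑ e : Fin m → α, h (Fin.cons i e) := by
  rw [← (Fin.consEquiv fun _ => α).sum_comp, Fintype.sum_prod_type]
  rfl

namespace QLF

section Field

variable {p : ℕ} {F : Type*} [Field F] {ι κ ν : Type*} [Fintype ι] [Fintype κ] [Fintype ν]
  {a : ι → F} {b : κ → F} {d : ν → F}

theorem eval_smul (a : ι → F) (c : F) (x : ι → F) : eval p a (c • x) = c ^ p * eval p a x := by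
  simp only [eval, Pi.smul_apply, smul_eq_mul, mul_pow, mul_sum]
  exact sum_congr rfl fun i _ => by ring

theorem Anisotropic.eq_zero_of_eval_eq_zero (h : Anisotropic p a) {x : ι → F}
    (hx : eval p a x = 0) : x = 0 :=
  by_contra fun hne => h ⟨x, hne, hx⟩

theorem Subform.range_eval_subset (h : Subform p a b) :
    Set.range (eval p a) ⊆ Set.range (eval p b) := by
  obtain ⟨T, -, hT⟩ := h
  rintro _ ⟨x, rfl⟩
  exact ⟨T x, (hT x).symm⟩

theorem Isometric.range_eval_eq (h : Isometric p a b) :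
    Set.range (eval p a) = Set.range (eval p b) := by
  obtain ⟨T, hT⟩ := h
  refine (Subform.range_eval_subset ⟨T, T.injective, hT⟩).antisymm ?_
  rintro _ ⟨y, rfl⟩
  exact ⟨T.symm y, by rw [hT, T.apply_symm_apply]⟩

theorem Isometric.trans {c : ν → F} (h₁ : Isometric p a b) (h₂ : Isometric p b c) :
    Isometric p a c := by
  obtain ⟨T₁, hT₁⟩ := h₁
  obtain ⟨T₂, hT₂⟩ := h₂
  exact ⟨T₁.trans T₂, fun x => (hT₁ x).trans (hT₂ _)⟩

theorem isometric_comp_equiv (b : κ → F) (ρ : ι ≃ κ) : Isometric p b (b ∘ ρ) := by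
  refine ⟨LinearEquiv.funCongrLeft F F ρ, fun x => ?_⟩
  simp only [eval, comp_apply, LinearEquiv.funCongrLeft_apply, LinearMap.funLeft_apply]
  exact (Equiv.sum_comp ρ fun k => b k * x k ^ p).symm

theorem eval_tensor (a : ι → F) (d : ν → F) (x : ι × ν → F) :
    eval p (tensor p a d) x = ∑ j, eval p a (fun i => x (i, j)) * d j := by
  simp only [eval, tensor, Fintype.sum_prod_type, sum_mul]
  rw [sum_comm]
  exact sum_congr rfl fun j _ => sum_congr rfl fun i _ => by ring

theorem range_eval_tensor {K : Subfield F} (hK : Set.range (eval p a) = K) :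
    Set.range (eval p (tensor p a d)) = Submodule.span K (Set.range d) := by
  ext y
  rw [SetLike.mem_coe, Subfield.mem_span_range_iff_exists_fun]
  constructor
  · rintro ⟨x, rfl⟩
    refine ⟨_, fun j => ?_, (eval_tensor a d x).symm⟩
    rw [← SetLike.mem_coe, ← hK]
    exact Set.mem_range_self _
  · rintro ⟨l, hl, rfl⟩
    choose y hy using fun j => (hK.symm ▸ hl j : l j ∈ Set.range (eval p a))
    exact ⟨fun q => y q.2 q.1, by simp only [eval_tensor, hy]⟩

theorem Anisotropic.tensor_of_linearIndependent (ha : Anisotropic p a) {K : Subfield F}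
    (hK : ∀ x, eval p a x ∈ K) (hd : LinearIndependent K d) : Anisotropic p (tensor p a d) := by
  rintro ⟨x, hx0, hx⟩
  rw [eval_tensor] at hx
  have hcol := Subfield.linearIndependent_iff.mp hd _ (fun j => hK _) hx
  exact hx0 (funext fun q => congrFun (ha.eq_zero_of_eval_eq_zero (hcol q.2)) q.1)

theorem Isometric.exists_tensor_fin (h : Isometric p b (tensor p a d)) :
    ∃ (k : ℕ) (γ : Fin k → F), Isometric p b (tensor p a γ) :=
  let σ := Fintype.equivFin ν
  ⟨_, d ∘ σ.symm, h.trans (isometric_comp_equiv _ ((Equiv.refl ι).prodCongr σ.symm))⟩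

theorem pfister_cons {m : ℕ} (β : F) (b : Fin m → F) (i : Fin p) (e : Fin m → Fin p) :
    pfister p (Fin.cons β b) (Fin.cons i e) = β ^ (i : ℕ) * pfister p b e := by
  simp [pfister, Fin.prod_univ_succ]

theorem pfister_mul {m : ℕ} (b : Fin m → F) (e f : Fin m → Fin p) :
    pfister p b e * pfister p b f =
      (∏ i, b i ^ (((e i : ℕ) + f i) / p)) ^ p * pfister p b (e + f) := by
  simp only [pfister, ← prod_mul_distrib, ← prod_pow]
  refine prod_congr rfl fun i _ => ?_
  rw [← pow_add, ← pow_mul, ← pow_add, Pi.add_apply, Fin.val_add, Nat.div_add_mod']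

theorem mul_mem_span_pfister {m : ℕ} (K : Subfield F) (hK : ∀ x : F, x ^ p ∈ K)
    (b : Fin m → F) {x y : F} (hx : x ∈ Submodule.span K (Set.range (pfister p b)))
    (hy : y ∈ Submodule.span K (Set.range (pfister p b))) :
    x * y ∈ Submodule.span K (Set.range (pfister p b)) := by
  have hmul := Submodule.mul_mem_mul hx hy
  rw [Submodule.span_mul_span] at hmul
  refine Submodule.span_le.mpr ?_ hmul
  rintro _ ⟨_, ⟨e, rfl⟩, _, ⟨f, rfl⟩, rfl⟩
  change pfister p b e * pfister p b f ∈ _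
  rw [pfister_mul]
  exact Submodule.smul_mem _ (⟨_, hK _⟩ : K) (Submodule.subset_span ⟨e + f, rfl⟩)

end Field

section PfisterField

variable {p : ℕ} [Fact p.Prime] {F : Type*} [Field F] {m : ℕ}

theorem pfister_zero (b : Fin m → F) : pfister p b 0 = 1 := by
  simp [pfister]

theorem pfister_single (b : Fin m → F) (i : Fin m) : pfister p b (Pi.single i 1) = b i := by
  have h1 : ((1 : Fin p) : ℕ) = 1 := by
    rw [Fin.val_one', Nat.mod_eq_of_lt (Fact.out : p.Prime).one_lt]
  rw [pfister, prod_eq_single i (fun j _ hj => by simp [Pi.single_eq_of_ne hj]) (by simp),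
    Pi.single_eq_same, h1, pow_one]

theorem eval_tensor_ite {ι ν : Type*} [Fintype ι] [Fintype ν] [DecidableEq ν]
    (a : ι → F) (d : ν → F) (j : ν) (y : ι → F) :
    eval p (tensor p a d) (fun q => if q.2 = j then y q.1 else 0) = d j * eval p a y := by
  rw [eval_tensor, sum_eq_single j, mul_comm]
  · simp
  · intro j' _ hj'
    simp [eval, hj', zero_pow (Fact.out : p.Prime).ne_zero]
  · simp

variable (K : Subfield F)

theorem isIntegral_of_pow_mem (hK : ∀ x : F, x ^ p ∈ K) (x : F) : IsIntegral K x := by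
  refine IsIntegral.of_pow (Fact.out : p.Prime).pos ⟨Polynomial.X - Polynomial.C ⟨x ^ p, hK x⟩,
    Polynomial.monic_X_sub_C _, ?_⟩
  simp only [Polynomial.eval₂_sub, Polynomial.eval₂_X, Polynomial.eval₂_C]
  exact sub_self _

/-- The field `K(b₁,…,bₘ)`, built as the `K`-span of the monomials of `⟪b₁,…,bₘ⟫`. -/
def pfisterField (hK : ∀ x : F, x ^ p ∈ K) (b : Fin m → F) : Subfield F :=
  let A := (Submodule.span K (Set.range (pfister p b))).toSubalgebra
    (Submodule.subset_span ⟨0, pfister_zero b⟩) fun _ _ => mul_mem_span_pfister K hK b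
  (A.toIntermediateField fun x hx => A.inv_mem_of_algebraic (x := ⟨x, hx⟩)
    (isIntegral_of_pow_mem K hK x).isAlgebraic).toSubfield

theorem coe_pfisterField (hK : ∀ x : F, x ^ p ∈ K) (b : Fin m → F) :
    (pfisterField K hK b : Set F) = Submodule.span K (Set.range (pfister p b)) := rfl

variable {K} {hK : ∀ x : F, x ^ p ∈ K}

theorem pfisterField_le_iff {b : Fin m → F} {S : Subfield F} :
    pfisterField K hK b ≤ S ↔ K ≤ S ∧ ∀ i, b i ∈ S := by
  constructor
  · intro h
    refine ⟨fun x hx => h ?_, fun i => h ?_⟩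
    · rw [← SetLike.mem_coe, coe_pfisterField, ← mul_one x, ← pfister_zero (p := p) b]
      exact Submodule.smul_mem _ (⟨x, hx⟩ : K) (Submodule.subset_span ⟨0, rfl⟩)
    · rw [← SetLike.mem_coe, coe_pfisterField, ← pfister_single (p := p) b i]
      exact Submodule.subset_span ⟨_, rfl⟩
  · rintro ⟨hKS, hbS⟩ x hx
    rw [← SetLike.mem_coe, coe_pfisterField, SetLike.mem_coe,
      Subfield.mem_span_range_iff_exists_fun] at hx
    obtain ⟨l, hl, rfl⟩ := hx
    exact sum_mem fun e _ => mul_mem (hKS (hl e)) (prod_mem fun i _ => pow_mem (hbS i) _)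

theorem le_pfisterField (b : Fin m → F) : K ≤ pfisterField K hK b :=
  (pfisterField_le_iff.mp le_rfl).1

theorem mem_pfisterField (b : Fin m → F) (i : Fin m) : b i ∈ pfisterField K hK b :=
  (pfisterField_le_iff.mp le_rfl).2 i

theorem pfisterField_cons_le_iff {β : F} {b : Fin m → F} {S : Subfield F} :
    pfisterField K hK (Fin.cons β b) ≤ S ↔ β ∈ S ∧ pfisterField K hK b ≤ S := by
  simp only [pfisterField_le_iff, Fin.forall_fin_succ, Fin.cons_zero, Fin.cons_succ]
  tauto

theorem pfisterField_cons_of_mem {β : F} {b : Fin m → F} (hβ : β ∈ pfisterField K hK b) :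
    pfisterField K hK (Fin.cons β b) = pfisterField K hK b :=
  le_antisymm (pfisterField_cons_le_iff.mpr ⟨hβ, le_rfl⟩) (pfisterField_cons_le_iff.mp le_rfl).2

theorem pfisterField_cons_congr (β : F) {k : ℕ} {b : Fin m → F} {c : Fin k → F}
    (h : pfisterField K hK c = pfisterField K hK b) :
    pfisterField K hK (Fin.cons β c) = pfisterField K hK (Fin.cons β b) := by
  have hb := pfisterField_cons_le_iff.mp (le_refl (pfisterField K hK (Fin.cons β b)))
  have hc := pfisterField_cons_le_iff.mp (le_refl (pfisterField K hK (Fin.cons β c)))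
  exact le_antisymm (pfisterField_cons_le_iff.mpr ⟨hb.1, h ▸ hb.2⟩)
    (pfisterField_cons_le_iff.mpr ⟨hc.1, h ▸ hc.2⟩)

end PfisterField

section CharP

variable {p : ℕ} [Fact p.Prime] {F : Type*} [Field F] [CharP F p]
  {ι κ ν : Type*} [Fintype ι] [Fintype κ] [Fintype ν] {a : ι → F} {b : κ → F} {d : ν → F}

theorem eval_add (a x y : ι → F) : eval p a (x + y) = eval p a x + eval p a y := by
  simp only [eval, Pi.add_apply, add_pow_char, mul_add, sum_add_distrib]

theorem eval_sub (a x y : ι → F) : eval p a (x - y) = eval p a x - eval p a y := by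
  simp only [eval, Pi.sub_apply, sub_pow_char, mul_sub, sum_sub_distrib]

theorem Anisotropic.injective_eval (h : Anisotropic p a) : Injective (eval p a) := fun x y hxy =>
  sub_eq_zero.mp (h.eq_zero_of_eval_eq_zero (by rw [eval_sub, hxy, sub_self]))

theorem Anisotropic.exists_linearMap_of_range_subset (hb : Anisotropic p b)
    (h : Set.range (eval p a) ⊆ Set.range (eval p b)) :
    ∃ T : (ι → F) →ₗ[F] (κ → F), ∀ x, eval p a x = eval p b (T x) := by
  choose T hT using fun x => h ⟨x, rfl⟩
  refine ⟨{ toFun := T, map_add' := fun x y => ?_, map_smul' := fun c x => ?_ },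
    fun x => (hT x).symm⟩
  · exact hb.injective_eval (by rw [hT, eval_add, eval_add, hT, hT])
  · exact hb.injective_eval (by rw [hT, RingHom.id_apply, eval_smul, eval_smul, hT])

theorem Anisotropic.subform_of_range_subset (ha : Anisotropic p a) (hb : Anisotropic p b)
    (h : Set.range (eval p a) ⊆ Set.range (eval p b)) : Subform p a b := by
  obtain ⟨T, hT⟩ := hb.exists_linearMap_of_range_subset h
  exact ⟨T, fun x y hxy => ha.injective_eval (by rw [hT, hT, hxy]), hT⟩

theorem Anisotropic.isometric_of_range_eq (ha : Anisotropic p a) (hb : Anisotropic p b)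
    (h : Set.range (eval p a) = Set.range (eval p b)) : Isometric p a b := by
  obtain ⟨T, hT⟩ := hb.exists_linearMap_of_range_subset h.subset
  obtain ⟨S, hS⟩ := ha.exists_linearMap_of_range_subset h.superset
  have hT_inj : Injective T := fun x y hxy => ha.injective_eval (by rw [hT, hT, hxy])
  have hT_surj : Surjective T := fun y => ⟨S y, hb.injective_eval (by rw [← hT, ← hS])⟩
  exact ⟨LinearEquiv.ofBijective T ⟨hT_inj, hT_surj⟩, hT⟩

theorem Anisotropic.subform_of_isometric_tensor (ha : Anisotropic p a) (hb : Anisotropic p b)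
    {W : Subfield F} (hW : Set.range (eval p b) = W) (h1 : 1 ∈ Set.range (eval p a))
    (h : Isometric p b (tensor p a d)) : Subform p a b := by
  classical
  have hdW : ∀ j, ∀ v ∈ Set.range (eval p a), d j * v ∈ W := by
    rintro j _ ⟨y, rfl⟩
    rw [← SetLike.mem_coe, ← hW, h.range_eval_eq, ← eval_tensor_ite]
    exact Set.mem_range_self _
  obtain ⟨x, hx⟩ : (1 : F) ∈ Set.range (eval p (tensor p a d)) := by
    rw [← h.range_eval_eq, hW]
    exact one_mem W
  rw [eval_tensor] at hx
  obtain ⟨j, -, hj⟩ := exists_ne_zero_of_sum_ne_zero (hx ▸ one_ne_zero)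
  have hdj : d j ≠ 0 := right_ne_zero_of_mul hj
  have hdjW : d j ∈ W := by simpa using hdW j 1 h1
  refine ha.subform_of_range_subset hb fun v hv => hW ▸ ?_
  simpa [hdj] using mul_mem (inv_mem hdjW) (hdW j v hv)

theorem range_eval_eq_span (a : ι → F) :
    Set.range (eval p a) = Submodule.span (frobenius F p).fieldRange (Set.range a) := by
  ext x
  simp only [Set.mem_range, SetLike.mem_coe, Subfield.mem_span_range_iff_exists_fun,
    RingHom.mem_fieldRange, frobenius_def, eval]
  constructor
  · rintro ⟨y, rfl⟩
    exact ⟨fun i => y i ^ p, fun i => ⟨y i, rfl⟩, sum_congr rfl fun i _ => mul_comm _ _⟩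
  · rintro ⟨l, hl, rfl⟩
    choose y hy using hl
    exact ⟨y, sum_congr rfl fun i _ => by rw [hy, mul_comm]⟩

theorem pow_mem_fieldRange_frobenius (x : F) : x ^ p ∈ (frobenius F p).fieldRange :=
  ⟨x, rfl⟩

theorem range_eval_pfister {m : ℕ} (b : Fin m → F) :
    Set.range (eval p (pfister p b)) = pfisterField _ pow_mem_fieldRange_frobenius b :=
  range_eval_eq_span _

end CharP

section PBasis

open Polynomial

variable {p : ℕ} [Fact p.Prime] {F : Type*} [Field F] [CharP F p] {m : ℕ}

theorem linearIndependent_pow_of_pow_mem {S : Subfield F} {β : F} (hβp : β ^ p ∈ S)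
    (hβ : β ∉ S) : LinearIndependent S fun i : Fin p => β ^ (i : ℕ) := by
  have hp : p.Prime := Fact.out
  have hirr : Irreducible (X ^ p - C (⟨β ^ p, hβp⟩ : S)) := by
    refine X_pow_sub_C_irreducible_of_prime hp fun c hc => hβ ?_
    have : (c : F) = β :=
      frobenius_inj F p (by simpa [frobenius_def] using congrArg Subtype.val hc)
    exact this ▸ c.2
  have hmin : minpoly S β = X ^ p - C ⟨β ^ p, hβp⟩ :=
    (minpoly.eq_of_irreducible_of_monic hirr
      (by rw [map_sub, aeval_X_pow, aeval_C]; exact sub_self _)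
      (monic_X_pow_sub_C _ hp.ne_zero)).symm
  have hdeg : (minpoly S β).natDegree = p := by
    rw [hmin, natDegree_X_pow_sub_C]
  exact hdeg ▸ linearIndependent_pow β

variable {K : Subfield F} {hK : ∀ x : F, x ^ p ∈ K}

theorem linearIndependent_pfister_cons {k : ℕ} {β : F} {c : Fin k → F}
    (hc : LinearIndependent K (pfister p c)) (hβ : β ∉ pfisterField K hK c) :
    LinearIndependent K (pfister p (Fin.cons β c)) := by
  have hpow := linearIndependent_pow_of_pow_mem (le_pfisterField c (hK β)) hβ
  rw [Subfield.linearIndependent_iff] at hc hpow ⊢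
  intro l hl hsum g
  let μ : Fin p → F := fun i => ∑ e, l (Fin.cons i e) * pfister p c e
  have hμK : ∀ i, μ i ∈ pfisterField K hK c := fun i =>
    sum_mem fun e _ => mul_mem (le_pfisterField c (hl _)) <| by
      rw [← SetLike.mem_coe, coe_pfisterField]
      exact Submodule.subset_span ⟨e, rfl⟩
  have hμ : ∑ i, μ i * β ^ (i : ℕ) = 0 := by
    rw [← hsum, Fintype.sum_fin_succ_pi]
    refine sum_congr rfl fun i _ => ?_
    rw [sum_mul]
    exact sum_congr rfl fun e _ => by rw [pfister_cons]; ring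
  rw [← Fin.cons_self_tail g]
  exact hc _ (fun e => hl _) (hpow μ hμK hμ (g 0)) (Fin.tail g)

theorem exists_linearIndependent_pfister (b : Fin m → F) :
    ∃ (k : ℕ) (c : Fin k → F),
      LinearIndependent K (pfister p c) ∧ pfisterField K hK c = pfisterField K hK b := by
  induction m with
  | zero =>
    refine ⟨0, b, linearIndependent_unique_iff.mpr ?_, rfl⟩
    simp [pfister]
  | succ m ih =>
    obtain ⟨β, b, rfl⟩ : ∃ (β : F) (b' : Fin m → F), b = Fin.cons β b' :=
      ⟨_, _, (Fin.cons_self_tail b).symm⟩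
    obtain ⟨k, c, hc, hcb⟩ := ih b
    by_cases hβ : β ∈ pfisterField K hK c
    · exact ⟨k, c, hc, by rw [pfisterField_cons_of_mem (hcb ▸ hβ), hcb]⟩
    · exact ⟨k + 1, Fin.cons β c, linearIndependent_pfister_cons hc hβ,
        pfisterField_cons_congr β hcb⟩

theorem exists_isometric_tensor_pfister {n : ℕ} {a : Fin n → F} {b : Fin m → F}
    (ha : Anisotropic p (pfister p a)) (hb : Anisotropic p (pfister p b))
    (h : Subform p (pfister p a) (pfister p b)) :
    ∃ (k : ℕ) (c : Fin k → F), (∀ i, c i ≠ 0) ∧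
      Isometric p (pfister p b) (tensor p (pfister p a) (pfister p c)) := by
  set K := pfisterField _ pow_mem_fieldRange_frobenius a
  set W := pfisterField _ pow_mem_fieldRange_frobenius b
  have hKW : K ≤ W := by
    simpa only [range_eval_pfister, SetLike.coe_subset_coe] using h.range_eval_subset
  have hpK : ∀ x : F, x ^ p ∈ K := fun x => le_pfisterField a (pow_mem_fieldRange_frobenius x)
  obtain ⟨k, c, hc, hcb⟩ := exists_linearIndependent_pfister (hK := hpK) b
  have hbW : pfisterField K hpK b = W := le_antisymm
    (pfisterField_le_iff.mpr ⟨hKW, mem_pfisterField b⟩)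
    (pfisterField_le_iff.mpr ⟨(le_pfisterField a).trans (le_pfisterField b), mem_pfisterField b⟩)
  have haK : ∀ x, eval p (pfister p a) x ∈ K := fun x =>
    (range_eval_pfister a).subset (Set.mem_range_self x)
  refine ⟨k, c, fun i => pfister_single (p := p) c i ▸ hc.ne_zero _,
    hb.isometric_of_range_eq (ha.tensor_of_linearIndependent haK hc) ?_⟩
  rw [range_eval_tensor (range_eval_pfister a), ← coe_pfisterField K hpK, hcb, hbW,
    range_eval_pfister]

end PBasis

end QLF

theorem stmt_13_general (p : ℕ) [Fact p.Prime] {F : Type u} [Field F] [CharP F p]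
    {n m : ℕ} (ac : Fin n → F) (bc : Fin m → F)
    (h1 : QLF.Anisotropic p (QLF.pfister p ac))
    (h2 : QLF.Anisotropic p (QLF.pfister p bc)) :
    (QLF.Subform p (QLF.pfister p ac) (QLF.pfister p bc) ↔
      ∃ (k : ℕ) (γ : Fin k → F),
        QLF.Isometric p (QLF.pfister p bc) (QLF.tensor p (QLF.pfister p ac) γ)) ∧
    (QLF.Subform p (QLF.pfister p ac) (QLF.pfister p bc) →
      ∃ (k : ℕ) (c : Fin k → F), (∀ i, c i ≠ 0) ∧
        QLF.Isometric p (QLF.pfister p bc)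
          (QLF.tensor p (QLF.pfister p ac) (QLF.pfister p c))) := by
  refine ⟨⟨fun h => ?_, fun ⟨k, γ, hγ⟩ => ?_⟩, QLF.exists_isometric_tensor_pfister h1 h2⟩
  · obtain ⟨k, c, -, hc⟩ := QLF.exists_isometric_tensor_pfister h1 h2 h
    exact hc.exists_tensor_fin
  · refine h1.subform_of_isometric_tensor h2 (QLF.range_eval_pfister bc) ?_ hγ
    rw [QLF.range_eval_pfister]
    exact one_mem _

/-- Let `π₁`, `π₂` be anisotropic quasi-Pfister forms over `F`.
Then `π₁ ⊆ π₂` iff `π₂ ≃ π₁ ⊗ γ` for some form `γ`; moreover in that case `γ` can be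
chosen to be a quasi-Pfister form. -/
theorem stmt_13 (p : ℕ) [Fact p.Prime] {F : Type u} [Field F] [CharP F p]
    {n m : ℕ} (ac : Fin n → F) (bc : Fin m → F)
    (hac : ∀ i, ac i ≠ 0) (hbc : ∀ i, bc i ≠ 0)
    (h1 : QLF.Anisotropic p (QLF.pfister p ac))
    (h2 : QLF.Anisotropic p (QLF.pfister p bc)) :
    (QLF.Subform p (QLF.pfister p ac) (QLF.pfister p bc) ↔
      ∃ (k : ℕ) (γ : Fin k → F),
        QLF.Isometric p (QLF.pfister p bc) (QLF.tensor p (QLF.pfister p ac) γ)) ∧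
    (QLF.Subform p (QLF.pfister p ac) (QLF.pfister p bc) →
      ∃ (k : ℕ) (c : Fin k → F), (∀ i, c i ≠ 0) ∧
        QLF.Isometric p (QLF.pfister p bc)
          (QLF.tensor p (QLF.pfister p ac) (QLF.pfister p c))) :=
  stmt_13_general p ac bc h1 h2
end

section
/- Let φ be an anisotropic diagonal quasilinear p-form over F of dimension at least 1, and let E be a subfield of F containing Fᵖ with the following property: for every a ∈ F×, if φ becomes isotropic over some field extension F(α)/F with αᵖ equal to the image of a, then a ∈ E. Then N_F(φ) ⊆ E. -/
/-!
Diagonal quasilinear `p`-forms over a field `F` of characteristic `p`,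
following Hoffmann and Zemková. A form of dimension `n` is recorded by its
coefficient tuple `a : ι → F` (for a finite index type `ι`), the form being
`x ↦ ∑ i, a i * (x i)^p`.
-/

universe u

/-!
If `u = φ(x)` and `v = φ(y)` are nonzero values and `u / v` is not a `p`-th power, adjoin a
`p`-th root `α` of `u / v`. In characteristic `p` the form is additive and `p`-semilinear, so
`φ(x - α y) = u - αᵖ v = 0`, and `x - α y ≠ 0` because `α ∉ F`. Hence every generator of
`N_F(φ)` over `Fᵖ` is either a `p`-th power or lies in `E` by hypothesis.
-/

open Polynomial

theorem AdjoinRoot.subfieldClosure_insert_root_eq_top {K : Type*} [Field K] (g : K[X])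
    [Fact (Irreducible g)] :
    Subfield.closure (insert (root g) (Set.range (of g))) = ⊤ := by
  have h := congrArg IntermediateField.toSubfield (IntermediateField.adjoin_root_eq_top g)
  rwa [IntermediateField.adjoin_toSubfield, Set.union_comm, ← Set.insert_eq] at h

theorem exists_adjoin_pthRoot {p : ℕ} (hp : p.Prime) {F : Type u} [Field F] [CharP F p]
    {a : F} (ha : ∀ c : F, c ^ p ≠ a) :
    ∃ (K : Type u) (_ : Field K) (_ : CharP K p) (f : F →+* K) (α : K),
      α ^ p = f a ∧ Subfield.closure (insert α (Set.range f)) = ⊤ ∧ α ∉ Set.range f := by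
  have : Fact (Irreducible (X ^ p - C a)) := ⟨X_pow_sub_C_irreducible_of_prime hp ha⟩
  let f := AdjoinRoot.of (X ^ p - C a)
  have : CharP (AdjoinRoot (X ^ p - C a)) p := charP_of_injective_ringHom f.injective p
  have hα : AdjoinRoot.root (X ^ p - C a) ^ p = f a := root_X_pow_sub_C_pow p a
  refine ⟨_, inferInstance, inferInstance, f, _, hα,
    AdjoinRoot.subfieldClosure_insert_root_eq_top _, ?_⟩
  rintro ⟨c, hc⟩
  exact ha c (f.injective (by rw [map_pow, hc, hα]))

namespace QLF

variable {p : ℕ} {F K ι : Type*} [Fintype ι]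

theorem eval_map [CommRing F] [CommRing K] (f : F →+* K) (a x : ι → F) :
    eval p (f ∘ a) (f ∘ x) = f (eval p a x) := by
  simp [eval, map_sum]

theorem eval_sub_smul [CommRing K] [Fact p.Prime] [CharP K p] (a x y : ι → K) (c : K) :
    eval p a (x - c • y) = eval p a x - c ^ p * eval p a y := by
  simp only [eval, Pi.sub_apply, Pi.smul_apply, smul_eq_mul, Finset.mul_sum,
    ← Finset.sum_sub_distrib]
  exact Finset.sum_congr rfl fun i _ => by rw [sub_pow_char, mul_pow]; ring

theorem ne_zero_of_eval_ne_zero [CommRing F] (hp : p ≠ 0) {a x : ι → F}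
    (hx : eval p a x ≠ 0) : x ≠ 0 := by
  rintro rfl
  simp [eval, zero_pow hp] at hx

theorem isotropic_map_of_eval_eq_pow_mul [Field F] [Field K] [Fact p.Prime] [CharP K p]
    (a : ι → F) (f : F →+* K) {α : K} (hα : α ∉ Set.range f) {x y : ι → F} (hy : y ≠ 0)
    (h : f (eval p a x) = α ^ p * f (eval p a y)) :
    Isotropic p (f ∘ a) := by
  refine ⟨f ∘ x - α • (f ∘ y), fun hz => ?_, ?_⟩
  · obtain ⟨j, hj⟩ := Function.ne_iff.1 hy
    have hfy : f (y j) ≠ 0 := (map_ne_zero f).2 hj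
    have hzj : f (x j) - α * f (y j) = 0 := congrFun hz j
    exact hα ⟨x j / y j, by rw [map_div₀, div_eq_iff hfy]; linear_combination hzj⟩
  · rw [eval_sub_smul, eval_map, eval_map, h, sub_self]

theorem normField_le_of_div_mem [Field F] {a : ι → F} {E : Subfield F}
    (hE : ∀ c : F, c ^ p ∈ E)
    (hdiv : ∀ u ∈ values p a, ∀ v ∈ values p a, u ≠ 0 → v ≠ 0 → u / v ∈ E) :
    normField p a ≤ E := by
  refine Subfield.closure_le.2 ?_
  rintro z (⟨c, rfl⟩ | ⟨u, hu, v, hv, hu0, hv0, rfl⟩)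
  · exact hE c
  · exact hdiv u hu v hv hu0 hv0

end QLF

theorem stmt_14_general (p : ℕ) [Fact p.Prime] {F : Type u} [Field F] [CharP F p]
    {n : ℕ} (φ : Fin n → F)
    (E : Subfield F) (hE : ∀ x : F, x ^ p ∈ E)
    (h : ∀ a : F, a ≠ 0 →
      (∃ (K : Type u) (_ : Field K) (f : F →+* K) (α : K),
        α ^ p = f a ∧
        Subfield.closure (insert α (Set.range ⇑f)) = ⊤ ∧
        QLF.Isotropic p (f ∘ φ)) →
      a ∈ E) :
    QLF.normField p φ ≤ E := by
  have hp : p.Prime := Fact.out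
  refine QLF.normField_le_of_div_mem hE ?_
  rintro u ⟨x, rfl⟩ v ⟨y, rfl⟩ hu hv
  by_cases hpow : ∃ c : F, c ^ p = QLF.eval p φ x / QLF.eval p φ y
  · obtain ⟨c, hc⟩ := hpow
    exact hc ▸ hE c
  push Not at hpow
  obtain ⟨K, _, _, f, α, hα, hgen, hαF⟩ := exists_adjoin_pthRoot hp hpow
  refine h _ (div_ne_zero hu hv) ⟨K, inferInstance, f, α, hα, hgen, ?_⟩
  refine QLF.isotropic_map_of_eval_eq_pow_mul φ f hαF
    (x := x) (QLF.ne_zero_of_eval_ne_zero hp.ne_zero hv) ?_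
  rw [hα, ← map_mul, div_mul_cancel₀ _ hv]

/-- Let `φ` be an anisotropic quasilinear `p`-form of dimension ≥ 1
over `F` and `E` a subfield of `F` containing `Fᵖ` such that whenever `φ` becomes
isotropic over a field extension `F(α)/F` with `αᵖ = a ∈ F×`, one has `a ∈ E`.
Then `N_F(φ) ⊆ E`. -/
theorem stmt_14 (p : ℕ) [Fact p.Prime] {F : Type u} [Field F] [CharP F p]
    {n : ℕ} (hn : 1 ≤ n) (φ : Fin n → F) (hφ : QLF.Anisotropic p φ)
    (E : Subfield F) (hE : ∀ x : F, x ^ p ∈ E)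
    (h : ∀ a : F, a ≠ 0 →
      (∃ (K : Type u) (_ : Field K) (f : F →+* K) (α : K),
        α ^ p = f a ∧
        Subfield.closure (insert α (Set.range ⇑f)) = ⊤ ∧
        QLF.Isotropic p (f ∘ φ)) →
      a ∈ E) :
    QLF.normField p φ ≤ E :=
  stmt_14_general p φ E hE h
end

section
/- Let F be a field of characteristic p > 0, let a ∈ F with a not a p-th power in F, and let k, l ∈ ℤ with k ≢ 0 (mod p) and l ≢ 0 (mod p). Then the diagonal quasilinear p-forms ⟨1, aᵏ⟩ and ⟨1, aˡ⟩ are similar if and only if k ≡ l (mod p) or k ≡ −l (mod p). -/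
/-!
Diagonal quasilinear `p`-forms over a field `F` of characteristic `p`,
following Hoffmann and Zemková. A form of dimension `n` is recorded by its
coefficient tuple `a : ι → F` (for a finite index type `ι`), the form being
`x ↦ ∑ i, a i * (x i)^p`.
-/

universe u

section Stmt17Aux

open Polynomial

variable (p : ℕ) [Fact p.Prime] {F : Type u} [Field F] [CharP F p]

private lemma stmt17_minpoly_eq (a : F) (ha : ∀ x : F, x ^ p ≠ a) :
    minpoly ((frobenius F p).fieldRange) a
      = X ^ p - C (⟨a ^ p, ⟨a, rfl⟩⟩ : (frobenius F p).fieldRange) := by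
  have hp : p.Prime := Fact.out
  haveI : ExpChar F p := .prime hp
  set K := (frobenius F p).fieldRange with hK
  set β : K := ⟨a ^ p, ⟨a, rfl⟩⟩ with hβ
  have hb : ∀ b : K, b ^ p ≠ β := by
    rintro ⟨x, y, rfl⟩ h
    have hx : ((frobenius F p) y) ^ p = a ^ p := congrArg Subtype.val h
    have h0 : ((frobenius F p) y - a) ^ p = 0 := by
      rw [sub_pow_char, hx, sub_self]
    have h2 : (frobenius F p) y = a :=
      sub_eq_zero.mp (pow_eq_zero_iff hp.ne_zero |>.mp h0)
    exact ha y (by rw [← frobenius_def]; exact h2)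
  have hirr : Irreducible (X ^ p - C β) := X_pow_sub_C_irreducible_of_prime hp hb
  have hroot : (Polynomial.aeval a) (X ^ p - C β) = 0 := by
    simp only [map_sub, map_pow, aeval_X, aeval_C]
    exact sub_eq_zero_of_eq rfl
  exact (minpoly.eq_of_irreducible_of_monic hirr hroot (monic_X_pow_sub_C β hp.ne_zero)).symm

private lemma stmt17_four_term (a : F) (ha : ∀ x : F, x ^ p ≠ a)
    (n0 n1 n2 n3 : ℕ) (h0 : n0 < p) (h1 : n1 < p) (h2 : n2 < p) (h3 : n3 < p)
    (h02 : n0 ≠ n2) (h03 : n0 ≠ n3) (h12 : n1 ≠ n2) (h13 : n1 ≠ n3) (h23 : n2 ≠ n3)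
    (b0 b1 b2 b3 : F)
    (hsum : b0 ^ p * a ^ n0 + b1 ^ p * a ^ n1 + b2 ^ p * a ^ n2 + b3 ^ p * a ^ n3 = 0) :
    b2 = 0 ∧ b3 = 0 := by
  have hp : p.Prime := Fact.out
  set K := (frobenius F p).fieldRange with hK
  have hmem : ∀ x : F, x ^ p ∈ K := fun x => ⟨x, rfl⟩
  set q : K[X] := C ⟨b0 ^ p, hmem b0⟩ * X ^ n0 + C ⟨b1 ^ p, hmem b1⟩ * X ^ n1
    + C ⟨b2 ^ p, hmem b2⟩ * X ^ n2 + C ⟨b3 ^ p, hmem b3⟩ * X ^ n3 with hq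
  have hqa : (Polynomial.aeval a) q = 0 := by
    simp only [hq, map_add, map_mul, map_pow, aeval_X, aeval_C]
    exact hsum
  have hq0 : q = 0 := by
    by_contra hne
    have hd := minpoly.degree_le_of_ne_zero K a hne hqa
    rw [stmt17_minpoly_eq p a ha, degree_X_pow_sub_C hp.pos] at hd
    have hlt : q.degree < (p : WithBot ℕ) := by
      have hterm : ∀ (b : K) (n : ℕ), n < p → (C b * X ^ n).degree < (p : WithBot ℕ) := by
        intro b n hn
        exact lt_of_le_of_lt (degree_C_mul_X_pow_le n b) (by exact_mod_cast hn)
      rw [hq]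
      refine lt_of_le_of_lt (degree_add_le _ _) (max_lt ?_ (hterm _ _ h3))
      refine lt_of_le_of_lt (degree_add_le _ _) (max_lt ?_ (hterm _ _ h2))
      exact lt_of_le_of_lt (degree_add_le _ _) (max_lt (hterm _ _ h0) (hterm _ _ h1))
    exact absurd hd (not_le.mpr hlt)
  constructor
  · have hc := congrArg (fun r => r.coeff n2) hq0
    simp only [hq, coeff_add, coeff_C_mul, coeff_X_pow, coeff_zero,
      if_neg (Ne.symm h02), if_neg (Ne.symm h12), if_true, eq_self_iff_true, mul_one,
      if_neg h23, mul_zero, add_zero, zero_add] at hc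
    have : b2 ^ p = 0 := by simpa [Subtype.ext_iff] using hc
    exact pow_eq_zero_iff hp.ne_zero |>.mp this
  · have hc := congrArg (fun r => r.coeff n3) hq0
    simp only [hq, coeff_add, coeff_C_mul, coeff_X_pow, coeff_zero,
      if_neg (Ne.symm h03), if_neg (Ne.symm h13), if_true, eq_self_iff_true, mul_one,
      if_neg (Ne.symm h23), mul_zero, add_zero, zero_add] at hc
    have : b3 ^ p = 0 := by simpa [Subtype.ext_iff] using hc
    exact pow_eq_zero_iff hp.ne_zero |>.mp this

private noncomputable def stmt17_scalePerm {F : Type u} [Field F] (c : Fin 2 → F)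
    (hc : ∀ i, c i ≠ 0) (σ : Fin 2 ≃ Fin 2) : (Fin 2 → F) ≃ₗ[F] (Fin 2 → F) :=
  (LinearEquiv.funCongrLeft F F σ).trans
    (LinearEquiv.piCongrRight fun i => LinearEquiv.smulOfNeZero F F (c i) (hc i))

private lemma stmt17_scalePerm_apply {F : Type u} [Field F] (c : Fin 2 → F)
    (hc : ∀ i, c i ≠ 0) (σ : Fin 2 ≃ Fin 2) (x : Fin 2 → F) (i : Fin 2) :
    stmt17_scalePerm c hc σ x i = c i * x (σ i) := rfl

private lemma stmt17_eval_two {F : Type u} [Field F] (b : Fin 2 → F) (x : Fin 2 → F) :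
    QLF.eval p b x = b 0 * x 0 ^ p + b 1 * x 1 ^ p := by
  simp [QLF.eval, Fin.sum_univ_two]

end Stmt17Aux

/-- Let `a ∈ F` be a non-`p`-th power and `k, l ∈ ℤ` not divisible
by `p`. Then `⟨1, aᵏ⟩` and `⟨1, aˡ⟩` are similar iff `k ≡ l (mod p)` or
`k ≡ -l (mod p)`. -/
theorem stmt_17 (p : ℕ) [Fact p.Prime] {F : Type u} [Field F] [CharP F p]
    (a : F) (ha : a ∉ Set.range fun x : F => x ^ p)
    (k l : ℤ) (hk : ¬ (p : ℤ) ∣ k) (hl : ¬ (p : ℤ) ∣ l) :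
    QLF.Similar p ![1, a ^ k] ![1, a ^ l] ↔
      ((p : ℤ) ∣ k - l ∨ (p : ℤ) ∣ k + l) := by
  
  have hp : p.Prime := Fact.out
  have hp0 : (0:ℤ) < (p:ℤ) := by exact_mod_cast hp.pos
  have ha' : ∀ x : F, x ^ p ≠ a := fun x hx => ha ⟨x, hx⟩
  have ha0 : a ≠ 0 := fun h => ha' 0 (by rw [h]; exact zero_pow hp.ne_zero)
  have hzp : ∀ m : ℤ, (a ^ m) ^ p = a ^ (m * (p:ℤ)) := fun m => by
    rw [← zpow_natCast (a ^ m) p, ← zpow_mul]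
  have hdec : ∀ m : ℤ, a ^ m = a ^ ((m % (p:ℤ)).toNat) * (a ^ (m / (p:ℤ))) ^ p := by
    intro m
    rw [hzp]
    have h1 : 0 ≤ m % (p:ℤ) := Int.emod_nonneg m (by positivity)
    have h2 : (((m % (p:ℤ)).toNat : ℤ)) = m % (p:ℤ) := Int.toNat_of_nonneg h1
    rw [← zpow_natCast a (m % (p:ℤ)).toNat, h2, ← zpow_add₀ ha0]
    congr 1
    rw [mul_comm]
    exact (Int.emod_add_mul_ediv m (p:ℤ)).symm
  constructor
  · -- forward direction
    rintro ⟨c, hc, T, hT⟩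
    by_contra hcon
    push_neg at hcon
    obtain ⟨hkl, hkl'⟩ := hcon
    have E1 := hT ![1, 0]
    have E2 := hT ![0, 1]
    rw [stmt17_eval_two, stmt17_eval_two] at E1 E2
    set u0 := T ![1, 0] 0 with hu0
    set u1 := T ![1, 0] 1 with hu1
    set v0 := T ![0, 1] 0 with hv0d
    set v1 := T ![0, 1] 1 with hv1d
    simp only [Matrix.cons_val_zero, Matrix.cons_val_one, Matrix.head_cons, one_pow, mul_one,
      one_mul, zero_pow hp.ne_zero, mul_zero, add_zero, zero_add] at E1 E2
    -- E1 : 1 = c * u0 ^ p + c * a ^ l * u1 ^ p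
    -- E2 : a ^ k = c * v0 ^ p + c * a ^ l * v1 ^ p
    have h3 : a ^ k * (u0 ^ p + a ^ l * u1 ^ p) = v0 ^ p + a ^ l * v1 ^ p := by
      linear_combination (u0 ^ p + a ^ l * u1 ^ p) * E2 - (v0 ^ p + a ^ l * v1 ^ p) * E1
    set k' := (k % (p:ℤ)).toNat with hk'
    set l' := (l % (p:ℤ)).toNat with hl'
    set m' := ((k + l) % (p:ℤ)).toNat with hm'
    have hbound : ∀ m : ℤ, (m % (p:ℤ)).toNat < p := by
      intro m
      have h2 : m % (p:ℤ) < (p:ℤ) := Int.emod_lt_of_pos m hp0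
      have h1 : 0 ≤ m % (p:ℤ) := Int.emod_nonneg m (by positivity)
      omega
    have hne0 : ∀ m : ℤ, ¬ (p:ℤ) ∣ m → (m % (p:ℤ)).toNat ≠ 0 := by
      intro m hm h
      have h1 : 0 ≤ m % (p:ℤ) := Int.emod_nonneg m (by positivity)
      exact hm (Int.dvd_of_emod_eq_zero (by omega))
    have hnee : ∀ m n : ℤ, ¬ (p:ℤ) ∣ m - n → (m % (p:ℤ)).toNat ≠ (n % (p:ℤ)).toNat := by
      intro m n hmn h
      apply hmn
      apply Int.dvd_of_emod_eq_zero
      apply Int.emod_eq_emod_iff_emod_sub_eq_zero.mp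
      have h1 : 0 ≤ m % (p:ℤ) := Int.emod_nonneg m (by positivity)
      have h2 : 0 ≤ n % (p:ℤ) := Int.emod_nonneg n (by positivity)
      omega
    have hk'0 : k' ≠ 0 := hne0 _ hk
    have hl'0 : l' ≠ 0 := hne0 _ hl
    have hm'0 : m' ≠ 0 := hne0 _ hkl'
    have hk'l' : k' ≠ l' := hnee k l hkl
    have hm'l' : m' ≠ l' := hnee (k + l) l (by simpa using hk)
    set wk := a ^ (k / (p:ℤ)) with hwk
    set wl := a ^ (l / (p:ℤ)) with hwl
    set wm := a ^ ((k + l) / (p:ℤ)) with hwm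
    have hka : a ^ k = a ^ k' * wk ^ p := hdec k
    have hla : a ^ l = a ^ l' * wl ^ p := hdec l
    have hma : a ^ (k + l) = a ^ m' * wm ^ p := hdec (k + l)
    have hnegp : ∀ x : F, (-x) ^ p = -(x ^ p) := by
      intro x
      rw [neg_eq_neg_one_mul, mul_pow, neg_one_pow_char F p, neg_one_mul]
    have hsum : (wk * u0) ^ p * a ^ k' + (wm * u1) ^ p * a ^ m'
        + (-v0) ^ p * a ^ (0:ℕ) + (-(wl * v1)) ^ p * a ^ l' = 0 := by
      rw [mul_pow, mul_pow, hnegp, hnegp, mul_pow, pow_zero]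
      have h4 : a ^ k * u0 ^ p + a ^ (k + l) * u1 ^ p - v0 ^ p - a ^ l * v1 ^ p = 0 := by
        have h5 : a ^ (k + l) = a ^ k * a ^ l := zpow_add₀ ha0 k l
        linear_combination h3 + u1 ^ p * h5
      rw [hka, hla, hma] at h4
      linear_combination h4
    obtain ⟨hv0, hv1⟩ := stmt17_four_term p a ha' k' m' 0 l' (hbound k) (hbound (k + l))
      hp.pos (hbound l) hk'0 hk'l' hm'0 hm'l' (Ne.symm hl'0) _ _ _ _ hsum
    have hv0' : v0 = 0 := neg_eq_zero.mp hv0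
    have hv1' : v1 = 0 := by
      rcases mul_eq_zero.mp (neg_eq_zero.mp hv1) with h | h
      · exact absurd h (zpow_ne_zero _ ha0)
      · exact h
    rw [hv0', hv1', zero_pow hp.ne_zero] at E2
    simp only [mul_zero, add_zero, zero_add] at E2
    exact zpow_ne_zero k ha0 E2
  · -- backward direction
    rintro (⟨s, hs⟩ | ⟨s, hs⟩)
    · -- k - l = p * s : take the similarity factor 1
      have hcv : ∀ i, (![1, a ^ s] : Fin 2 → F) i ≠ 0 := by
        intro i
        fin_cases i
        · exact one_ne_zero
        · exact zpow_ne_zero _ ha0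
      refine ⟨1, one_ne_zero, stmt17_scalePerm ![1, a ^ s] hcv (Equiv.refl _), ?_⟩
      intro x
      rw [stmt17_eval_two, stmt17_eval_two]
      simp only [stmt17_scalePerm_apply, Equiv.refl_apply, Matrix.cons_val_zero,
        Matrix.cons_val_one, Matrix.head_cons]
      have h1 : (a ^ s) ^ p = a ^ (k - l) := by
        rw [hzp]; congr 1; rw [hs, mul_comm]
      have h2 : a ^ l * a ^ (k - l) = a ^ k := by
        rw [← zpow_add₀ ha0]; congr 1; ring
      rw [mul_pow (a ^ s) (x 1) p, h1]
      linear_combination -(x 1) ^ p * h2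
    · -- k + l = p * s : take the similarity factor a ^ k
      have hcv : ∀ i, (![1, a ^ (-s)] : Fin 2 → F) i ≠ 0 := by
        intro i
        fin_cases i
        · exact one_ne_zero
        · exact zpow_ne_zero _ ha0
      refine ⟨a ^ k, zpow_ne_zero _ ha0,
        stmt17_scalePerm ![1, a ^ (-s)] hcv (Equiv.swap 0 1), ?_⟩
      intro x
      rw [stmt17_eval_two, stmt17_eval_two]
      simp only [stmt17_scalePerm_apply, Equiv.swap_apply_left, Equiv.swap_apply_right,
        Matrix.cons_val_zero, Matrix.cons_val_one, Matrix.head_cons]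
      have h1 : (a ^ (-s)) ^ p = a ^ (-(k + l)) := by
        rw [hzp]; congr 1; rw [hs]; ring
      have h2 : a ^ k * a ^ l * a ^ (-(k + l)) = 1 := by
        rw [← zpow_add₀ ha0, ← zpow_add₀ ha0]
        have h3 : k + l + -(k + l) = 0 := by ring
        rw [h3, zpow_zero]
      rw [mul_pow (a ^ (-s)) (x 0) p, h1]
      linear_combination -(x 0) ^ p * h2
end

section
/- Let F be a field of characteristic p > 0 and let a ∈ F with a not a p-th power in F. Let φ and ψ be quasi-Pfister neighbors of ⟪a⟫ = ⟨1, a, …, a^{p−1}⟩ over F of the same dimension. Then φ and ψ are Vishik equivalent. -/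
/-!
Diagonal quasilinear `p`-forms over a field `F` of characteristic `p`,
following Hoffmann and Zemková. A form of dimension `n` is recorded by its
coefficient tuple `a : ι → F` (for a finite index type `ι`), the form being
`x ↦ ∑ i, a i * (x i)^p`.
-/

universe u

open Polynomial


lemma aux_pow_indep {p : ℕ} [Fact p.Prime] {E : Type*} [Field E] [CharP E p]
    {α : E} (hα : α ∉ Set.range fun x : E => x ^ p)
    (y : Fin p → E) (h : ∑ i : Fin p, α ^ (i : ℕ) * y i ^ p = 0) : y = 0 := by
  have hp : p.Prime := Fact.out
  haveI : ExpChar E p := .prime hp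
  set K : Subfield E := (frobenius E p).fieldRange with hK
  have hc : (α ^ p) ∈ K := ⟨α, rfl⟩
  set c : K := ⟨α ^ p, hc⟩ with hcdef
  have hirr : Irreducible (X ^ p - C c) := by
    apply X_pow_sub_C_irreducible_of_prime hp
    intro b hb
    apply hα
    have hb' : (b : E) ^ p = α ^ p := congrArg Subtype.val hb
    have hba : (b : E) = α := frobenius_inj E p hb'
    obtain ⟨x, hx⟩ := b.2
    exact ⟨x, by rw [← hba]; exact hx⟩
  have halg : ∀ x : K, algebraMap K E x = (x : E) := fun x => rfl
  have haev : Polynomial.aeval α (X ^ p - C c : K[X]) = 0 := by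
    simp [hcdef, halg]
  have hmin : minpoly K α = X ^ p - C c :=
    (minpoly.eq_of_irreducible_of_monic hirr haev (monic_X_pow_sub_C _ hp.ne_zero)).symm
  by_contra hy
  obtain ⟨j, hj⟩ : ∃ j, y j ≠ 0 := by
    by_contra hall
    push_neg at hall
    exact hy (funext hall)
  set k : Fin p → K := fun i => ⟨y i ^ p, ⟨y i, rfl⟩⟩ with hk
  set q : K[X] := ∑ i : Fin p, monomial (i : ℕ) (k i) with hq
  have hcoeff : ∀ i : Fin p, q.coeff i = k i := by
    intro i
    rw [hq, finset_sum_coeff]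
    rw [Finset.sum_eq_single i]
    · simp [coeff_monomial]
    · intro b _ hb
      rw [coeff_monomial, if_neg (by exact_mod_cast fun hh => hb (Fin.ext hh))]
    · simp
  have hqne : q ≠ 0 := by
    intro h0
    apply hj
    have := hcoeff j
    rw [h0, coeff_zero] at this
    have : y j ^ p = 0 := by
      have := congrArg Subtype.val this.symm
      simpa [hk] using this
    exact pow_eq_zero_iff hp.ne_zero |>.mp this
  have haq : aeval α q = 0 := by
    rw [hq, map_sum]
    rw [← h]
    apply Finset.sum_congr rfl
    intro i _
    rw [aeval_monomial, halg]
    simp [hk, mul_comm]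
  have hle := minpoly.degree_le_of_ne_zero K α hqne haq
  rw [hmin, degree_X_pow_sub_C hp.pos] at hle
  have hdq : q.degree < (p : WithBot ℕ) := by
    refine lt_of_le_of_lt (degree_sum_le _ _) ?_
    rw [Finset.sup_lt_iff (by exact_mod_cast WithBot.bot_lt_coe p)]
    intro i _
    exact lt_of_le_of_lt (degree_monomial_le _ _) (by exact_mod_cast i.2)
  exact absurd (lt_of_le_of_lt hle hdq) (lt_irrefl _)

lemma aux_aniso_pf {p : ℕ} [Fact p.Prime] {E : Type*} [Field E] [CharP E p]
    {α : E} (hα : α ∉ Set.range fun x : E => x ^ p)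
    (x : (Fin 1 → Fin p) → E)
    (hx : ∑ e : Fin 1 → Fin p, α ^ ((e 0 : Fin p) : ℕ) * x e ^ p = 0) : x = 0 := by
  have h2 : ∑ i : Fin p, α ^ (i : ℕ) * x (fun _ => i) ^ p = 0 := by
    rw [← hx]
    refine Fintype.sum_equiv (Equiv.funUnique (Fin 1) (Fin p)).symm _ _ (fun i => rfl)
  have h3 := aux_pow_indep hα _ h2
  funext e
  have he : e = fun _ => e 0 := funext fun i => by rw [Subsingleton.elim i 0]
  rw [he]
  exact congrFun h3 (e 0)

lemma aux_eval_single {p : ℕ} (hp : p ≠ 0) {R : Type*} [CommRing R] {n : ℕ}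
    (b : Fin n → R) (j : Fin n) : QLF.eval p b (Pi.single j 1) = b j := by
  rw [QLF.eval, Finset.sum_eq_single j]
  · simp
  · intro i _ hij
    rw [Pi.single_apply, if_neg hij, zero_pow hp, mul_zero]
  · simp

lemma aux_pf_apply (p : ℕ) {F : Type*} [CommRing F] (a : F) (e : Fin 1 → Fin p) :
    QLF.pfister p (fun _ : Fin 1 => a) e = a ^ ((e 0 : Fin p) : ℕ) := by
  rw [QLF.pfister, Fin.prod_univ_one]

open scoped Classical in
lemma main_defect (p : ℕ) [Fact p.Prime] {F : Type*} [Field F] [CharP F p]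
    {a : F} (ha : a ∉ Set.range fun x : F => x ^ p)
    {n : ℕ} (hn : 1 ≤ n) (φ : Fin n → F) {c : F} (hc : c ≠ 0)
    (T : (Fin n → F) →ₗ[F] ((Fin 1 → Fin p) → F)) (hTinj : Function.Injective T)
    (hT : ∀ x, QLF.eval p (fun i => c * φ i) x
      = QLF.eval p (QLF.pfister p fun _ : Fin 1 => a) (T x))
    (E : Type*) [Field E] [CharP E p] (f : F →+* E) :
    QLF.defect p (f ∘ φ) = if f a ∈ Set.range (fun x : E => x ^ p) then n - 1 else 0 := by
  have hp : p.Prime := Fact.out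
  haveI : ExpChar E p := .prime hp
  have hcoef : ∀ j, c * φ j
      = ∑ e : Fin 1 → Fin p, a ^ ((e 0 : Fin p) : ℕ) * (T (Pi.single j 1) e) ^ p := by
    intro j
    have h1 := hT (Pi.single j 1)
    rw [aux_eval_single hp.ne_zero] at h1
    rw [h1, QLF.eval]
    exact Finset.sum_congr rfl fun e _ => by rw [aux_pf_apply]
  have hcφ : ∀ j, c * φ j ≠ 0 := by
    intro j h0
    have h1 : ∑ e : Fin 1 → Fin p, a ^ ((e 0 : Fin p) : ℕ) * (T (Pi.single j 1) e) ^ p = 0 := by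
      rw [← hcoef j, h0]
    have h2 := aux_aniso_pf ha _ h1
    have h3 : Pi.single j (1 : F) = 0 := hTinj (by rw [h2, map_zero])
    have h4 := congrFun h3 j
    simp at h4
  by_cases hcase : f a ∈ Set.range (fun x : E => x ^ p)
  · rw [if_pos hcase]
    obtain ⟨α, hα⟩ := hcase
    set β : Fin n → E := fun j =>
      ∑ e : Fin 1 → Fin p, α ^ ((e 0 : Fin p) : ℕ) * f (T (Pi.single j 1) e) with hβ
    have hβp : ∀ j, β j ^ p = f (c * φ j) := by
      intro j
      rw [hβ, sum_pow_char, hcoef j, map_sum]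
      refine Finset.sum_congr rfl fun e _ => ?_
      have hα' : α ^ p = f a := hα
      rw [mul_pow, ← pow_mul, mul_comm ((e 0 : Fin p) : ℕ) p, pow_mul, hα',
        map_mul, map_pow, map_pow]
    have hβne : ∀ j, β j ≠ 0 := by
      intro j h0
      exact (f.injective.ne (hcφ j)) (by rw [map_zero, ← hβp j, h0, zero_pow hp.ne_zero])
    set G : (Fin n → E) →ₗ[E] E := ∑ j, β j • (LinearMap.proj j) with hGdef
    have hG : ∀ x, G x = ∑ j, β j * x j := by
      intro x
      simp [hGdef]
    have hker : QLF.zeroSubmodule p (f ∘ φ) = LinearMap.ker G := by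
      ext x
      have key : (G x) ^ p = f c * QLF.eval p (f ∘ φ) x := by
        rw [hG, sum_pow_char, QLF.eval, Finset.mul_sum]
        refine Finset.sum_congr rfl fun j _ => ?_
        rw [mul_pow, hβp j, map_mul, Function.comp_apply]
        ring
      constructor
      · intro hx
        have hx' : QLF.eval p (f ∘ φ) x = 0 := hx
        have : (G x) ^ p = 0 := by rw [key, hx', mul_zero]
        exact LinearMap.mem_ker.mpr (pow_eq_zero_iff hp.ne_zero |>.mp this)
      · intro hx
        have hx' : G x = 0 := LinearMap.mem_ker.mp hx
        have h0 : f c * QLF.eval p (f ∘ φ) x = 0 := by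
          rw [← key, hx', zero_pow hp.ne_zero]
        have : QLF.eval p (f ∘ φ) x = 0 :=
          (mul_eq_zero.mp h0).resolve_left (by simpa using f.injective.ne hc)
        exact this
    have hsurj : Function.Surjective G := by
      intro z
      set j0 : Fin n := ⟨0, hn⟩
      refine ⟨Pi.single j0 ((β j0)⁻¹ * z), ?_⟩
      rw [hG, Finset.sum_eq_single j0]
      · rw [Pi.single_eq_same, ← mul_assoc, mul_inv_cancel₀ (hβne j0), one_mul]
      · intro i _ hij
        rw [Pi.single_eq_of_ne hij, mul_zero]
      · simp
    have hrk := G.finrank_range_add_finrank_ker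
    rw [LinearMap.range_eq_top.mpr hsurj, finrank_top, Module.finrank_self] at hrk
    have hdom : Module.finrank E (Fin n → E) = n := by
      simp [Module.finrank_pi]
    rw [hdom] at hrk
    rw [QLF.defect, hker]
    omega
  · rw [if_neg hcase]
    have hker0 : LinearMap.ker T = ⊥ := LinearMap.ker_eq_bot.mpr hTinj
    obtain ⟨L, hL⟩ := T.exists_leftInverse_of_injective hker0
    set M := LinearMap.toMatrix' T with hM
    set N := LinearMap.toMatrix' L with hN
    have hNM : N * M = 1 := by
      rw [hN, hM, ← LinearMap.toMatrix'_comp, hL, LinearMap.toMatrix'_id]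
    have hMs : ∀ e j, M e j = T (Pi.single j 1) e := by
      intro e j
      have hps : (fun j' => if j' = j then (1:F) else 0) = Pi.single j 1 := by
        funext j'
        rw [Pi.single_apply]
      rw [hM, LinearMap.toMatrix'_apply]
    have hbot : QLF.zeroSubmodule p (f ∘ φ) = ⊥ := by
      rw [Submodule.eq_bot_iff]
      intro x hx
      have hx' : QLF.eval p (f ∘ φ) x = 0 := hx
      set z : (Fin 1 → Fin p) → E := (M.map f).mulVec x with hz
      have hz0 : ∑ e : Fin 1 → Fin p, (f a) ^ ((e 0 : Fin p) : ℕ) * z e ^ p = 0 := by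
        have step : ∀ e, z e ^ p = ∑ j, f (M e j) ^ p * x j ^ p := by
          intro e
          rw [hz, Matrix.mulVec, dotProduct, sum_pow_char]
          exact Finset.sum_congr rfl fun j _ => by
            rw [Matrix.map_apply, mul_pow]
        calc ∑ e : Fin 1 → Fin p, (f a) ^ ((e 0 : Fin p) : ℕ) * z e ^ p
            = ∑ e : Fin 1 → Fin p, ∑ j, (f a) ^ ((e 0 : Fin p) : ℕ) * f (M e j) ^ p * x j ^ p := by
              refine Finset.sum_congr rfl fun e _ => ?_
              rw [step e, Finset.mul_sum]
              exact Finset.sum_congr rfl fun j _ => by ring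
          _ = ∑ j, (∑ e : Fin 1 → Fin p, (f a) ^ ((e 0 : Fin p) : ℕ) * f (M e j) ^ p) * x j ^ p := by
              rw [Finset.sum_comm]
              exact Finset.sum_congr rfl fun j _ => by rw [Finset.sum_mul]
          _ = ∑ j, f (c * φ j) * x j ^ p := by
              refine Finset.sum_congr rfl fun j _ => ?_
              congr 1
              rw [hcoef j, map_sum]
              exact Finset.sum_congr rfl fun e _ => by
                rw [map_mul, map_pow, map_pow, hMs e j]
          _ = f c * QLF.eval p (f ∘ φ) x := by
              rw [QLF.eval, Finset.mul_sum]
              exact Finset.sum_congr rfl fun j _ => by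
                rw [map_mul, Function.comp_apply]; ring
          _ = 0 := by rw [hx', mul_zero]
      have hz1 : z = 0 := aux_aniso_pf hcase _ hz0
      have : ((N * M).map f).mulVec x = x := by
        rw [hNM, Matrix.map_one f (map_zero f) (map_one f), Matrix.one_mulVec]
      rw [Matrix.map_mul, ← Matrix.mulVec_mulVec, ← hz, hz1, Matrix.mulVec_zero] at this
      exact this.symm
    rw [QLF.defect, hbot, finrank_bot]

/-- Let `a ∈ F` be a non-`p`-th power and `φ`, `ψ` quasi-Pfister
neighbors of `⟪a⟫ = ⟨1, a, …, a^(p-1)⟩` of the same dimension. Then `φ ∼ᵥ ψ`. -/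
theorem stmt_18 (p : ℕ) [Fact p.Prime] {F : Type u} [Field F] [CharP F p]
    (a : F) (ha : a ∉ Set.range fun x : F => x ^ p)
    {n m : ℕ} (φ : Fin n → F) (ψ : Fin m → F)
    (hφ : QLF.IsNeighborOf p φ (QLF.pfister p fun _ : Fin 1 => a))
    (hψ : QLF.IsNeighborOf p ψ (QLF.pfister p fun _ : Fin 1 => a))
    (hdim : n = m) :
    QLF.VishikEquiv p φ ψ := by
  obtain ⟨c, hc, ⟨T, hTinj, hT⟩, hgt⟩ := hφ
  obtain ⟨d, hd, ⟨S, hSinj, hS⟩, hgt2⟩ := hψ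
  subst hdim
  have hp : p.Prime := Fact.out
  have hn : 1 ≤ n := by
    by_contra h0
    push_neg at h0
    interval_cases n
    simp [Fintype.card_fun] at hgt
  refine ⟨rfl, ?_⟩
  intro E _ _ f
  rw [main_defect p ha hn φ hc T hTinj hT E f, main_defect p ha hn ψ hd S hSinj hS E f]
end

section
/- Let p > 3 be a prime, let F be a field of characteristic p, and let a ∈ F with a not a p-th power in F. Then the diagonal quasilinear p-forms ⟨1, a⟩ and ⟨1, a²⟩ are Vishik equivalent but not similar. -/
/-!
Diagonal quasilinear `p`-forms over a field `F` of characteristic `p`,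
following Hoffmann and Zemková. A form of dimension `n` is recorded by its
coefficient tuple `a : ι → F` (for a finite index type `ι`), the form being
`x ↦ ∑ i, a i * (x i)^p`.
-/

universe u

/-!
Over any field `E` of characteristic `p`, the form `⟨1, b⟩` has defect `1` if `b ∈ Eᵖ` and `0`
otherwise, and for `k` prime to `p` an element `b` lies in `Eᵖ` exactly when `bᵏ` does; so
`⟨1, a⟩` and `⟨1, aᵏ⟩` are Vishik equivalent. If instead `⟨1, a⟩ ≃ c⟨1, a²⟩`, the images of the
two basis vectors give `1 = c(αᵖ + a²γᵖ)` and `a = c(βᵖ + a²δᵖ)`, hence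
`a(αᵖ + a²γᵖ) = βᵖ + a²δᵖ`. This is a relation among `1, a, a², a³` over `Fᵖ`, whereas `a` has
degree `p > 3` over `Fᵖ`; so `α = γ = 0`, which contradicts `1 = c(αᵖ + a²γᵖ)`.
-/

open Polynomial

theorem pow_mem_range_pow_iff_of_coprime {M : Type*} [CommGroupWithZero M] {p k : ℕ}
    (hp : 1 < p) (hk : k.Coprime p) (b : M) :
    b ^ k ∈ Set.range (· ^ p) ↔ b ∈ Set.range (· ^ p) := by
  refine ⟨fun ⟨d, hd⟩ => ?_, fun ⟨c, hc⟩ => ⟨c ^ k, ?_⟩⟩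
  · obtain rfl | hb := eq_or_ne b 0
    · exact ⟨0, zero_pow (by omega)⟩
    obtain ⟨m, -, hm⟩ := Nat.exists_mul_mod_eq_one_of_coprime hk hp
    obtain ⟨q, hq⟩ : ∃ q, k * m = q * p + 1 := ⟨k * m / p, by rw [← hm, Nat.div_add_mod']⟩
    refine ⟨d ^ m / b ^ q, ?_⟩
    dsimp only at hd ⊢
    rw [div_pow, div_eq_iff (pow_ne_zero _ (pow_ne_zero _ hb)), ← pow_mul, mul_comm m, pow_mul, hd,
      ← pow_mul, ← pow_mul, ← pow_succ', hq]
  · dsimp only at hc ⊢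
    rw [← hc, ← pow_mul, ← pow_mul, mul_comm]

section Frobenius

variable {F : Type*} [Field F] (p : ℕ) [hp : Fact p.Prime] [CharP F p]

theorem minpoly_frobenius_fieldRange {a : F} (ha : a ∉ Set.range (· ^ p)) :
    minpoly (frobenius F p).fieldRange a = X ^ p - C ⟨a ^ p, a, rfl⟩ := by
  have hirr : Irreducible (X ^ p - C (⟨a ^ p, a, rfl⟩ : (frobenius F p).fieldRange)) := by
    refine X_pow_sub_C_irreducible_of_prime hp.out ?_
    rintro ⟨_, c, rfl⟩ hc
    exact ha ⟨c, frobenius_inj F p (congrArg Subtype.val hc)⟩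
  refine (minpoly.eq_of_irreducible_of_monic hirr ?_ (monic_X_pow_sub_C _ hp.out.ne_zero)).symm
  simp only [map_sub, map_pow, aeval_X, aeval_C]
  exact sub_eq_zero.2 rfl

theorem linearIndependent_pow_frobenius_fieldRange {a : F} (ha : a ∉ Set.range (· ^ p)) :
    LinearIndependent (frobenius F p).fieldRange fun i : Fin p => a ^ (i : ℕ) := by
  have h := linearIndependent_pow (K := (frobenius F p).fieldRange) (S := F) a
  rwa [minpoly_frobenius_fieldRange p ha, natDegree_X_pow_sub_C] at h

theorem eq_of_sum_pow_mul_pow_eq {n : ℕ} (hn : n ≤ p) {a : F} (ha : a ∉ Set.range (· ^ p))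
    {s t : Fin n → F} (h : ∑ i, s i ^ p * a ^ (i : ℕ) = ∑ i, t i ^ p * a ^ (i : ℕ)) : s = t := by
  have hind := (linearIndependent_pow_frobenius_fieldRange p ha).comp _ (Fin.castLE_injective hn)
  funext i
  refine frobenius_inj F p (congrArg Subtype.val
    (Fintype.linearIndependent_iffₛ.1 hind (fun i => ⟨s i ^ p, s i, rfl⟩)
      (fun i => ⟨t i ^ p, t i, rfl⟩) ?_ i))
  simpa [Subfield.smul_def] using h

end Frobenius

namespace QLF

theorem eval_fin_two (p : ℕ) {R : Type*} [CommRing R] (b x : Fin 2 → R) :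
    eval p b x = b 0 * x 0 ^ p + b 1 * x 1 ^ p := by
  simp [eval, Fin.sum_univ_two]

variable (p : ℕ) [hp : Fact p.Prime] {E : Type*} [Field E] [CharP E p]

@[simp]
theorem mem_zeroSubmodule {ι : Type*} [Fintype ι] {b x : ι → E} :
    x ∈ zeroSubmodule p b ↔ eval p b x = 0 :=
  Iff.rfl

theorem defect_one_pow (c : E) : defect p ![1, c ^ p] = 1 := by
  have hzero : zeroSubmodule p ![1, c ^ p] = Submodule.span E {![-c, 1]} := by
    ext x
    have hfrob : eval p ![1, c ^ p] x = (x 0 + c * x 1) ^ p := by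
      simp [eval_fin_two, add_pow_char, mul_pow]
    rw [mem_zeroSubmodule, hfrob, pow_eq_zero_iff hp.out.ne_zero,
      Submodule.mem_span_singleton]
    constructor
    · intro h
      refine ⟨x 1, funext fun i => ?_⟩
      fin_cases i
      · simp only [Fin.zero_eta, Pi.smul_apply, Matrix.cons_val_zero, smul_eq_mul]
        linear_combination -h
      · simp
    · rintro ⟨r, rfl⟩
      simp only [Pi.smul_apply, Matrix.cons_val_zero, Matrix.cons_val_one, smul_eq_mul]
      ring
  rw [defect, hzero, finrank_span_singleton]
  simp

theorem defect_one_of_not_mem {b : E} (hb : b ∉ Set.range (· ^ p)) : defect p ![1, b] = 0 := by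
  suffices zeroSubmodule p ![1, b] = ⊥ by rw [defect, this, finrank_bot]
  refine (Submodule.eq_bot_iff _).2 fun x hx => ?_
  replace hx : x 0 ^ p + b * x 1 ^ p = 0 := by simpa [eval_fin_two] using hx
  have hx1 : x 1 = 0 := by
    by_contra hx1
    have hneg : (-x 0) ^ p = -x 0 ^ p := by
      rw [← frobenius_def, map_neg, frobenius_def]
    refine hb ⟨-x 0 / x 1, ?_⟩
    dsimp only
    rw [div_pow, hneg, div_eq_iff (pow_ne_zero p hx1)]
    linear_combination -hx
  have hx0 : x 0 = 0 := by simpa [hx1, hp.out.ne_zero] using hx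
  ext i
  fin_cases i
  · exact hx0
  · exact hx1

theorem defect_one_congr {b b' : E} (h : b ∈ Set.range (· ^ p) ↔ b' ∈ Set.range (· ^ p)) :
    defect p ![1, b] = defect p ![1, b'] := by
  by_cases hb : b ∈ Set.range (· ^ p)
  · obtain ⟨c, rfl⟩ := hb
    obtain ⟨c', rfl⟩ := h.1 ⟨c, rfl⟩
    rw [defect_one_pow, defect_one_pow]
  · rw [defect_one_of_not_mem p hb, defect_one_of_not_mem p (h.not.1 hb)]

theorem vishikEquiv_one_pow_of_coprime {F : Type u} [Field F] [CharP F p] {k : ℕ}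
    (hk : k.Coprime p) (a : F) : VishikEquiv p ![1, a] ![1, a ^ k] := by
  refine ⟨rfl, fun E _ _ f => ?_⟩
  have hcomp (b : F) : f ∘ ![1, b] = ![1, f b] := by
    ext i
    fin_cases i <;> simp
  rw [hcomp, hcomp, map_pow]
  exact defect_one_congr p (pow_mem_range_pow_iff_of_coprime hp.out.one_lt hk _).symm

theorem not_similar_one_sq {F : Type*} [Field F] [CharP F p] (hp3 : 3 < p) {a : F}
    (ha : a ∉ Set.range (· ^ p)) :
    ¬ Similar p ![1, a] ![1, a ^ 2] := by
  rintro ⟨c, -, T, hT⟩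
  set y := T ![1, 0]
  set z := T ![0, 1]
  have hy : 1 = c * (y 0 ^ p + a ^ 2 * y 1 ^ p) := by
    simpa [eval_fin_two, hp.out.ne_zero, mul_add, mul_assoc] using hT ![1, 0]
  have hz : a = c * (z 0 ^ p + a ^ 2 * z 1 ^ p) := by
    simpa [eval_fin_two, hp.out.ne_zero, mul_add, mul_assoc] using hT ![0, 1]
  have hyz : a * (y 0 ^ p + a ^ 2 * y 1 ^ p) = z 0 ^ p + a ^ 2 * z 1 ^ p := by
    linear_combination (y 0 ^ p + a ^ 2 * y 1 ^ p) * hz - (z 0 ^ p + a ^ 2 * z 1 ^ p) * hy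
  have hcoeff := eq_of_sum_pow_mul_pow_eq p (n := 4) (by omega) ha
    (s := ![0, y 0, 0, y 1]) (t := ![z 0, 0, z 1, 0]) (by
      simp only [Fin.sum_univ_four, Matrix.cons_val, zero_pow hp.out.ne_zero,
        Fin.coe_ofNat_eq_mod, Nat.reduceMod]
      linear_combination hyz)
  have hy0 : y 0 = 0 := by simpa using congrFun hcoeff 1
  have hy1 : y 1 = 0 := by simpa using congrFun hcoeff 3
  simp [hy0, hy1, hp.out.ne_zero] at hy

end QLF

/-- For `p > 3` prime, `F` of characteristic `p`, and `a ∈ F` a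
non-`p`-th power, the forms `⟨1, a⟩` and `⟨1, a²⟩` are Vishik equivalent but not
similar. -/
theorem stmt_19 (p : ℕ) [Fact p.Prime] (hp3 : 3 < p)
    {F : Type u} [Field F] [CharP F p]
    (a : F) (ha : a ∉ Set.range fun x : F => x ^ p) :
    QLF.VishikEquiv p ![1, a] ![1, a ^ 2] ∧ ¬ QLF.Similar p ![1, a] ![1, a ^ 2] :=
  ⟨QLF.vishikEquiv_one_pow_of_coprime p
      ((Nat.coprime_primes Nat.prime_two Fact.out).2 (by omega)) a,
    QLF.not_similar_one_sq p hp3 ha⟩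
end
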